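/- Let e, d be coprime positive integers, n = e+d, p = p_e ⊂ sl_n(ℂ) the e-th parabolic subalgebra, n ⊂ p the abelian ideal of block matrices [[0,B],[0,0]], and J = J_{(e,d)} the canonical 0-1 matrix. Then for every G ∈ sl_n(ℂ) there exist unique P ∈ p and N ∈ n such that G = [Jᵗ, P] + N. -/

import Mathlib

/-!
If `P ∈ p_e` and `[Jᵀ, P] ∈ n`, then `P` is scalar. In block form `J_{(e,d)}` has `J_{(e,d-e)}`
(if `e < d`) or `J_{(e-d,d)}` (if `d < e`) as a diagonal block, next to an identity block; the
conditions on `[Jᵀ, P]` force the matching diagonal block of `P` into the same situation for the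
smaller pair and tie the remaining blocks of `P` to it. Running the Euclidean algorithm on the
coprime pair down to `J_{(1,1)}` gives the claim, so the only traceless such `P` is `0`.

Hence `X ↦ [Jᵀ, π X] + τ X + tr X • 1`, where `π` kills the lower-left block and `τ` moves its
transpose to the upper-right block, is an injective and therefore bijective endomorphism of
`gl_n`. For traceless `G` the trace term of its preimage `X` vanishes, and `P = π X`, `N = τ X`.
Uniqueness is the triviality of the stabiliser again.
-/

open Matrix

/-- The entries of the canonical 0-1 matrix `J_{(e,d)}` defined by the recursion
`J_{(1,1)} = [[0,1],[0,0]]` together with the block extension rules. -/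
noncomputable def Jfun : ℕ → ℕ → ℕ → ℕ → ℂ
  | e, d, i, j =>
    if e = 1 ∧ d = 1 then (if i = 0 ∧ j = 1 then 1 else 0)
    else if h1 : 0 < e ∧ e < d then
      (if i < e then (if j = i + e then 1 else 0)
       else if e ≤ j then Jfun e (d - e) (i - e) (j - e) else 0)
    else if h2 : 0 < d ∧ d < e then
      (if i < e ∧ j < e then Jfun (e - d) d i j
       else if e - d ≤ i ∧ i < e ∧ j = i + d then 1 else 0)
    else 0
  termination_by e d _ _ => e + d
  decreasing_by all_goals omega

open Finset

section NatIndexed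

variable {e d : ℕ}

lemma Jfun_one_one (i j : ℕ) : Jfun 1 1 i j = if i = 0 ∧ j = 1 then 1 else 0 := by
  rw [Jfun]; simp

lemma Jfun_of_lt (he : 0 < e) (hlt : e < d) (i j : ℕ) :
    Jfun e d i j = if i < e then (if j = i + e then 1 else 0)
      else if e ≤ j then Jfun e (d - e) (i - e) (j - e) else 0 := by
  rw [Jfun, if_neg (by omega), dif_pos ⟨he, hlt⟩]

lemma Jfun_of_gt (hd : 0 < d) (hgt : d < e) (i j : ℕ) :
    Jfun e d i j = if i < e ∧ j < e then Jfun (e - d) d i j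
      else if e - d ≤ i ∧ i < e ∧ j = i + d then 1 else 0 := by
  rw [Jfun, if_neg (by omega), dif_neg (by omega), dif_pos ⟨hd, hgt⟩]

lemma Jfun_eq_of_lt_of_row_lt (he : 0 < e) (hlt : e < d) {i : ℕ} (hi : i < e) (j : ℕ) :
    Jfun e d i j = if j = i + e then 1 else 0 := by
  rw [Jfun_of_lt he hlt, if_pos hi]

lemma Jfun_eq_zero_of_lt_of_col_lt (he : 0 < e) (hlt : e < d) (i : ℕ) {j : ℕ} (hj : j < e) :
    Jfun e d i j = 0 := by
  rw [Jfun_of_lt he hlt]; split_ifs <;> first | rfl | omega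

lemma Jfun_add_add_of_lt (he : 0 < e) (hlt : e < d) (a b : ℕ) :
    Jfun e d (e + a) (e + b) = Jfun e (d - e) a b := by
  rw [Jfun_of_lt he hlt, if_neg (by omega), if_pos (by omega), Nat.add_sub_cancel_left,
    Nat.add_sub_cancel_left]

lemma Jfun_eq_of_gt_of_lt_of_lt (hd : 0 < d) (hgt : d < e) {i j : ℕ} (hi : i < e) (hj : j < e) :
    Jfun e d i j = Jfun (e - d) d i j := by
  rw [Jfun_of_gt hd hgt, if_pos ⟨hi, hj⟩]

lemma Jfun_eq_of_gt_of_col_ge (hd : 0 < d) (hgt : d < e) {i j : ℕ} (hi : i < e) (hj : e ≤ j) :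
    Jfun e d i j = if j = i + d then 1 else 0 := by
  rw [Jfun_of_gt hd hgt, if_neg (by omega)]
  exact if_congr (by omega) rfl rfl

lemma Jfun_eq_zero_of_gt_of_row_ge (hd : 0 < d) (hgt : d < e) {i : ℕ} (hi : e ≤ i) (j : ℕ) :
    Jfun e d i j = 0 := by
  rw [Jfun_of_gt hd hgt, if_neg (by omega), if_neg (by omega)]

lemma sum_range_ite_mul {m t : ℕ} (g : ℕ → ℂ) (p : ℕ → Prop) [DecidablePred p]
    (hp : ∀ k < m, p k ↔ k = t) :
    ∑ k ∈ range m, (if p k then 1 else 0) * g k = if t < m then g t else 0 := by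
  rw [sum_congr rfl fun k hk => by
    rw [if_congr (hp k (mem_range.1 hk)) rfl rfl, ite_mul, one_mul, zero_mul], sum_ite_eq']
  simp only [mem_range]

lemma sum_range_mul_ite {m t : ℕ} (g : ℕ → ℂ) (p : ℕ → Prop) [DecidablePred p]
    (hp : ∀ k < m, p k ↔ k = t) :
    ∑ k ∈ range m, g k * (if p k then 1 else 0) = if t < m then g t else 0 := by
  simp_rw [mul_comm (g _)]; exact sum_range_ite_mul g p hp

/- Entries of `Jᵀ P` and `P Jᵀ`, with `P` an `ℕ`-indexed array so that the recursion for
`J_{(e,d)}` can shift indices freely. -/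

noncomputable def jtMul (e d : ℕ) (P : ℕ → ℕ → ℂ) (i j : ℕ) : ℂ :=
  ∑ k ∈ range (e + d), Jfun e d k i * P k j

noncomputable def mulJt (e d : ℕ) (P : ℕ → ℕ → ℂ) (i j : ℕ) : ℂ :=
  ∑ k ∈ range (e + d), P i k * Jfun e d j k

/-- `P` has vanishing lower-left block and `[Jᵀ, P] ∈ n`: these are the elements of `p_e`
stabilising the functional `a ↦ tr (Jᵀ a)`. -/
structure IsStabilizer (e d : ℕ) (P : ℕ → ℕ → ℂ) : Prop where
  lowerLeft_eq_zero : ∀ i j, i < e + d → j < e + d → e ≤ i → j < e → P i j = 0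
  jtMul_eq_mulJt : ∀ i j, i < e + d → j < e + d → ¬(i < e ∧ e ≤ j) →
    jtMul e d P i j = mulJt e d P i j

def IsScalarOn (n : ℕ) (P : ℕ → ℕ → ℂ) (c : ℂ) : Prop :=
  ∀ i j, i < n → j < n → P i j = if i = j then c else 0

lemma IsScalarOn.jtMul_eq {P : ℕ → ℕ → ℂ} {c : ℂ} (hP : IsScalarOn (e + d) P c) (i : ℕ) {j : ℕ}
    (hj : j < e + d) : jtMul e d P i j = Jfun e d j i * c := by
  rw [jtMul, sum_eq_single_of_mem j (mem_range.2 hj) fun k hk hkj => by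
    rw [hP k j (mem_range.1 hk) hj, if_neg hkj, mul_zero], hP j j hj hj, if_pos rfl]

lemma IsScalarOn.mulJt_eq {P : ℕ → ℕ → ℂ} {c : ℂ} (hP : IsScalarOn (e + d) P c) {i : ℕ}
    (hi : i < e + d) (j : ℕ) : mulJt e d P i j = c * Jfun e d j i := by
  rw [mulJt, sum_eq_single_of_mem i (mem_range.2 hi) fun k hk hki => by
    rw [hP i k hi (mem_range.1 hk), if_neg (Ne.symm hki), zero_mul], hP i i hi hi, if_pos rfl]

lemma jtMul_eq_zero_of_lt (he : 0 < e) (hlt : e < d) (P : ℕ → ℕ → ℂ) {i : ℕ} (hi : i < e)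
    (j : ℕ) : jtMul e d P i j = 0 :=
  sum_eq_zero fun k _ => by rw [Jfun_eq_zero_of_lt_of_col_lt he hlt k hi, zero_mul]

lemma mulJt_of_lt_of_col_lt (he : 0 < e) (hlt : e < d) (P : ℕ → ℕ → ℂ) (i : ℕ) {j : ℕ}
    (hj : j < e) : mulJt e d P i j = P i (e + j) := by
  rw [mulJt]
  simp_rw [Jfun_eq_of_lt_of_row_lt he hlt hj]
  rw [sum_range_mul_ite _ _ fun k _ => (by omega : k = j + e ↔ k = e + j), if_pos (by omega)]

lemma jtMul_add_of_lt (he : 0 < e) (hlt : e < d) (P : ℕ → ℕ → ℂ) (a j : ℕ) :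
    jtMul e d P (e + a) j
      = (if a < e then P a j else 0) + jtMul e (d - e) (fun k l => P (e + k) l) a j := by
  rw [jtMul, sum_range_add, jtMul, Nat.add_sub_cancel' hlt.le]
  congr 1
  · rw [sum_congr rfl fun k hk => by rw [Jfun_eq_of_lt_of_row_lt he hlt (mem_range.1 hk)],
      sum_range_ite_mul _ _ fun k _ => (by omega : e + a = k + e ↔ k = a)]
  · simp_rw [Jfun_add_add_of_lt he hlt]

lemma mulJt_add_of_lt (he : 0 < e) (hlt : e < d) (P : ℕ → ℕ → ℂ) (i b : ℕ) :
    mulJt e d P i (e + b) = mulJt e (d - e) (fun k l => P k (e + l)) i b := by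
  rw [mulJt, sum_range_add, mulJt, Nat.add_sub_cancel' hlt.le, sum_eq_zero fun k hk => by
    rw [Jfun_eq_zero_of_lt_of_col_lt he hlt _ (mem_range.1 hk), mul_zero], zero_add]
  simp_rw [Jfun_add_add_of_lt he hlt]

theorem IsStabilizer.exists_isScalarOn_of_lt (he : 0 < e) (hlt : e < d) {P : ℕ → ℕ → ℂ}
    (hP : IsStabilizer e d P)
    (ih : ∀ Q, IsStabilizer e (d - e) Q → ∃ c, IsScalarOn (e + (d - e)) Q c) :
    ∃ c, IsScalarOn (e + d) P c := by
  obtain ⟨hll, hcomm⟩ := hP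
  -- `top_left`, `bottom_left`, `bottom_right`: the blocks of `[Jᵀ, P]` outside `n`
  have top_left : ∀ i j, i < e → j < e → P i (e + j) = 0 := fun i j hi hj => by
    have h := hcomm i j (by omega) (by omega) (by omega)
    rwa [jtMul_eq_zero_of_lt he hlt P hi, mulJt_of_lt_of_col_lt he hlt P i hj, eq_comm] at h
  have bottom_left : ∀ a j, a < d → j < e → P (e + a) (e + j) = if a < e then P a j else 0 := by
    intro a j ha hj
    have h := hcomm (e + a) j (by omega) (by omega) (by omega)
    rw [jtMul_add_of_lt he hlt, mulJt_of_lt_of_col_lt he hlt P _ hj, eq_comm] at h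
    rw [h, add_eq_left]
    exact sum_eq_zero fun k hk => mul_eq_zero_of_right _
      (hll (e + k) j (by simp at hk; omega) (by omega) (by omega) hj)
  have bottom_right : ∀ a b, a < d → b < d → (if a < e then P a (e + b) else 0)
      + jtMul e (d - e) (fun k l => P (e + k) (e + l)) a b
        = mulJt e (d - e) (fun k l => P (e + k) (e + l)) a b := fun a b ha hb => by
    have h := hcomm (e + a) (e + b) (by omega) (by omega) (by omega)
    rwa [jtMul_add_of_lt he hlt, mulJt_add_of_lt he hlt] at h
  obtain ⟨c, hc⟩ := ih (fun k l => P (e + k) (e + l))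
    ⟨fun a j ha _ hea hj => by rw [bottom_left a j (by omega) hj, if_neg (by omega)],
     fun a b ha hb hab => by
      rw [← bottom_right a b (by omega) (by omega),
        ite_eq_right_iff.2 fun hae => top_left a b hae (by omega), zero_add]⟩
  refine ⟨c, fun i j hi hj => ?_⟩
  rcases lt_or_ge i e with hie | hie <;> rcases lt_or_ge j e with hje | hje
  · rw [← if_pos hie (t := P i j) (e := 0), ← bottom_left i j (by omega) hje]
    exact hc i j (by omega) (by omega)
  · obtain ⟨b, rfl⟩ := Nat.exists_eq_add_of_le hje
    have h := bottom_right i b (by omega) (by omega)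
    rw [if_pos hie, hc.jtMul_eq _ (by omega), hc.mulJt_eq (by omega), mul_comm, add_eq_right] at h
    rw [h, if_neg (by omega)]
  · rw [hll i j hi hj hie hje, if_neg (by omega)]
  · obtain ⟨a, rfl⟩ := Nat.exists_eq_add_of_le hie
    obtain ⟨b, rfl⟩ := Nat.exists_eq_add_of_le hje
    exact (hc a b (by omega) (by omega)).trans (if_congr (by omega) rfl rfl)

lemma jtMul_of_gt_of_row_lt (hd : 0 < d) (hgt : d < e) (P : ℕ → ℕ → ℂ) {i : ℕ} (hi : i < e)
    (j : ℕ) : jtMul e d P i j = jtMul (e - d) d P i j := by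
  rw [jtMul, sum_range_add, sum_eq_zero (s := range d) fun k _ => by
    rw [Jfun_eq_zero_of_gt_of_row_ge hd hgt (by omega), zero_mul], add_zero, jtMul,
    Nat.sub_add_cancel hgt.le]
  exact sum_congr rfl fun k hk => by
    rw [Jfun_eq_of_gt_of_lt_of_lt hd hgt (mem_range.1 hk) hi]

lemma jtMul_add_of_gt (hd : 0 < d) (hgt : d < e) (P : ℕ → ℕ → ℂ) {a : ℕ} (ha : a < d) (j : ℕ) :
    jtMul e d P (e + a) j = P (e - d + a) j := by
  rw [jtMul, sum_range_add, sum_eq_zero (s := range d) fun k _ => by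
    rw [Jfun_eq_zero_of_gt_of_row_ge hd hgt (by omega), zero_mul], add_zero,
    sum_congr rfl fun k hk => by
      rw [Jfun_eq_of_gt_of_col_ge hd hgt (mem_range.1 hk) (by omega : e ≤ e + a)],
    sum_range_ite_mul _ _ fun k _ => (by omega : e + a = k + d ↔ k = e - d + a),
    if_pos (by omega)]

lemma mulJt_of_gt_of_col_lt (hd : 0 < d) (hgt : d < e) (P : ℕ → ℕ → ℂ) (i : ℕ) {j : ℕ}
    (hj : j < e) :
    mulJt e d P i j = mulJt (e - d) d P i j + if e - d ≤ j then P i (j + d) else 0 := by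
  rw [mulJt, sum_range_add, mulJt, Nat.sub_add_cancel hgt.le]
  congr 1
  · exact sum_congr rfl fun k hk => by
      rw [Jfun_eq_of_gt_of_lt_of_lt hd hgt hj (mem_range.1 hk)]
  · simp_rw [Jfun_eq_of_gt_of_col_ge hd hgt hj (Nat.le_add_right e _)]
    split_ifs with hj'
    · rw [sum_range_mul_ite _ _ fun k _ => (by omega : e + k = j + d ↔ k = j + d - e),
        if_pos (by omega), show e + (j + d - e) = j + d by omega]
    · exact sum_eq_zero fun k _ => by rw [if_neg (by omega), mul_zero]

lemma mulJt_of_gt_of_col_ge (hd : 0 < d) (hgt : d < e) (P : ℕ → ℕ → ℂ) (i : ℕ) {j : ℕ}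
    (hj : e ≤ j) : mulJt e d P i j = 0 :=
  sum_eq_zero fun k _ => by rw [Jfun_eq_zero_of_gt_of_row_ge hd hgt hj, mul_zero]

theorem IsStabilizer.exists_isScalarOn_of_gt (hd : 0 < d) (hgt : d < e) {P : ℕ → ℕ → ℂ}
    (hP : IsStabilizer e d P)
    (ih : IsStabilizer (e - d) d P → ∃ c, IsScalarOn (e - d + d) P c) :
    ∃ c, IsScalarOn (e + d) P c := by
  obtain ⟨hll, hcomm⟩ := hP
  -- `top_left`, `bottom_right`, `bottom_left`: the blocks of `[Jᵀ, P]` outside `n`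
  have top_left : ∀ i j, i < e → j < e → jtMul (e - d) d P i j
      = mulJt (e - d) d P i j + if e - d ≤ j then P i (j + d) else 0 := fun i j hi hj => by
    have h := hcomm i j (by omega) (by omega) (by omega)
    rwa [jtMul_of_gt_of_row_lt hd hgt P hi, mulJt_of_gt_of_col_lt hd hgt P i hj] at h
  have bottom_right : ∀ i j, e - d ≤ i → i < e → e ≤ j → j < e + d → P i j = 0 := by
    intro i j hi hie hj hjn
    obtain ⟨a, rfl⟩ : ∃ a, i = e - d + a := ⟨i - (e - d), by omega⟩
    have h := hcomm (e + a) j (by omega) hjn (by omega)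
    rwa [jtMul_add_of_gt hd hgt P (by omega), mulJt_of_gt_of_col_ge hd hgt P _ hj] at h
  have bottom_left : ∀ a j, a < d → j < e →
      P (e - d + a) j = if e - d ≤ j then P (e + a) (j + d) else 0 := by
    intro a j ha hj
    have h := hcomm (e + a) j (by omega) (by omega) (by omega)
    rw [jtMul_add_of_gt hd hgt P ha, mulJt_of_gt_of_col_lt hd hgt P _ hj] at h
    rw [h, add_eq_right]
    exact sum_eq_zero fun k hk => mul_eq_zero_of_left
      (hll (e + a) k (by omega) (by simp at hk; omega) (by omega) (by simp at hk; omega)) _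
  obtain ⟨c, hc⟩ := ih
    ⟨fun i j hi _ hi' hj => by
      obtain ⟨a, rfl⟩ : ∃ a, i = e - d + a := ⟨i - (e - d), by omega⟩
      rw [bottom_left a j (by omega) (by omega), if_neg (by omega)],
     fun i j hi hj hij => by
      rw [top_left i j (by omega) (by omega), add_eq_left]
      split_ifs with hj'
      · exact bottom_right i (j + d) (by omega) (by omega) (by omega) (by omega)
      · rfl⟩
  refine ⟨c, fun i j hi hj => ?_⟩
  rcases lt_or_ge i e with hie | hie <;> rcases lt_or_ge j e with hje | hje
  · exact hc i j (by omega) (by omega)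
  · rw [if_neg (by omega)]
    by_cases hi' : e - d ≤ i
    · exact bottom_right i j hi' hie hje hj
    · have h := top_left i (j - d) hie (by omega)
      rwa [hc.jtMul_eq _ (by omega), hc.mulJt_eq (by omega), if_pos (by omega),
        Nat.sub_add_cancel (by omega), mul_comm, left_eq_add] at h
  · rw [hll i j hi hj hie hje, if_neg (by omega)]
  · obtain ⟨a, rfl⟩ := Nat.exists_eq_add_of_le hie
    obtain ⟨b, rfl⟩ := Nat.exists_eq_add_of_le hje
    have h := bottom_left a (e - d + b) (by omega) (by omega)
    rw [if_pos (by omega), show e - d + b + d = e + b by omega] at h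
    rw [← h, hc _ _ (by omega) (by omega)]
    exact if_congr (by omega) rfl rfl

theorem IsStabilizer.exists_isScalarOn_one_one {P : ℕ → ℕ → ℂ} (hP : IsStabilizer 1 1 P) :
    ∃ c, IsScalarOn (1 + 1) P c := by
  have h00 := hP.jtMul_eq_mulJt 0 0 (by norm_num) (by norm_num) (by norm_num)
  have h10 := hP.jtMul_eq_mulJt 1 0 (by norm_num) (by norm_num) (by norm_num)
  have hll10 := hP.lowerLeft_eq_zero 1 0 (by norm_num) (by norm_num) le_rfl one_pos
  simp [jtMul, mulJt, Jfun_one_one] at h00 h10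
  refine ⟨P 0 0, fun i j hi hj => ?_⟩
  interval_cases i <;> interval_cases j <;> simp_all

theorem IsStabilizer.exists_isScalarOn (he : 0 < e) (hd : 0 < d) (hcop : e.Coprime d)
    {P : ℕ → ℕ → ℂ} (hP : IsStabilizer e d P) : ∃ c, IsScalarOn (e + d) P c := by
  induction hn : e + d using Nat.strong_induction_on generalizing e d P with
  | _ n ih =>
  subst hn
  rcases lt_trichotomy e d with hlt | rfl | hgt
  · exact hP.exists_isScalarOn_of_lt he hlt fun Q hQ =>
      ih _ (by omega) he (by omega) ((Nat.coprime_sub_self_right hlt.le).2 hcop) hQ rfl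
  · obtain rfl := (Nat.coprime_self e).1 hcop
    exact hP.exists_isScalarOn_one_one
  · exact hP.exists_isScalarOn_of_gt hd hgt fun hP' =>
      ih _ (by omega) (by omega) hd ((Nat.coprime_sub_self_left hgt.le).2 hcop) hP' rfl

end NatIndexed

section MatrixSide

variable {n : ℕ}

def natEntries (X : Matrix (Fin n) (Fin n) ℂ) (i j : ℕ) : ℂ :=
  if h : i < n ∧ j < n then X ⟨i, h.1⟩ ⟨j, h.2⟩ else 0

@[simp]
lemma natEntries_val (X : Matrix (Fin n) (Fin n) ℂ) (i j : Fin n) :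
    natEntries X i j = X i j := by
  simp [natEntries]

/-- Block upper triangular matrices: `p_e` without the trace condition. -/
def blockUpper (e : ℕ) : Submodule ℂ (Matrix (Fin n) (Fin n) ℂ) where
  carrier := {X | ∀ i j : Fin n, e ≤ (i : ℕ) → (j : ℕ) < e → X i j = 0}
  add_mem' hX hY i j hi hj := by simp [hX i j hi hj, hY i j hi hj]
  zero_mem' _ _ _ _ := rfl
  smul_mem' c X hX i j hi hj := by simp [hX i j hi hj]

/-- The abelian ideal `n`. -/
def upperRightBlock (e : ℕ) : Submodule ℂ (Matrix (Fin n) (Fin n) ℂ) where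
  carrier := {X | ∀ i j : Fin n, ¬((i : ℕ) < e ∧ e ≤ (j : ℕ)) → X i j = 0}
  add_mem' hX hY i j hij := by simp [hX i j hij, hY i j hij]
  zero_mem' _ _ _ := rfl
  smul_mem' c X hX i j hij := by simp [hX i j hij]

def blockUpperPart (e : ℕ) : Matrix (Fin n) (Fin n) ℂ →ₗ[ℂ] Matrix (Fin n) (Fin n) ℂ where
  toFun X := of fun i j => if e ≤ (i : ℕ) ∧ (j : ℕ) < e then 0 else X i j
  map_add' X Y := by ext i j; simp only [of_apply, Matrix.add_apply]; split_ifs <;> simp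
  map_smul' c X := by
    ext i j; simp only [of_apply, Matrix.smul_apply, RingHom.id_apply]; split_ifs <;> simp

def lowerLeftTranspose (e : ℕ) : Matrix (Fin n) (Fin n) ℂ →ₗ[ℂ] Matrix (Fin n) (Fin n) ℂ where
  toFun X := of fun i j => if (i : ℕ) < e ∧ e ≤ (j : ℕ) then X j i else 0
  map_add' X Y := by ext i j; simp only [of_apply, Matrix.add_apply]; split_ifs <;> simp
  map_smul' c X := by
    ext i j; simp only [of_apply, Matrix.smul_apply, RingHom.id_apply]; split_ifs <;> simp

variable {e : ℕ}

lemma blockUpperPart_mem (X : Matrix (Fin n) (Fin n) ℂ) : blockUpperPart e X ∈ blockUpper e :=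
  fun _ _ hi hj => if_pos ⟨hi, hj⟩

lemma lowerLeftTranspose_mem (X : Matrix (Fin n) (Fin n) ℂ) :
    lowerLeftTranspose e X ∈ upperRightBlock e :=
  fun _ _ hij => if_neg hij

lemma trace_blockUpperPart (X : Matrix (Fin n) (Fin n) ℂ) :
    (blockUpperPart e X).trace = X.trace :=
  sum_congr rfl fun i _ => if_neg (by omega)

lemma trace_lowerLeftTranspose (X : Matrix (Fin n) (Fin n) ℂ) :
    (lowerLeftTranspose e X).trace = 0 :=
  sum_eq_zero fun i _ => if_neg (by omega)

lemma eq_zero_of_blockUpperPart_eq_zero {X : Matrix (Fin n) (Fin n) ℂ}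
    (hP : blockUpperPart e X = 0) (hN : lowerLeftTranspose e X = 0) : X = 0 := by
  ext i j
  by_cases hij : e ≤ (i : ℕ) ∧ (j : ℕ) < e
  · simpa [lowerLeftTranspose, hij] using congr($hN j i)
  · simpa [blockUpperPart, hij] using congr($hP i j)

noncomputable def Jmatrix (e d : ℕ) : Matrix (Fin (e + d)) (Fin (e + d)) ℂ :=
  of fun i j => Jfun e d i j

variable {d : ℕ}

lemma Jmatrix_transpose_mul_apply (X : Matrix (Fin (e + d)) (Fin (e + d)) ℂ) (i j : Fin (e + d)) :
    ((Jmatrix e d)ᵀ * X) i j = jtMul e d (natEntries X) i j := by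
  rw [jtMul, ← Fin.sum_univ_eq_sum_range (fun k => Jfun e d k i * natEntries X k j)]
  simp [Jmatrix, mul_apply]

lemma mul_Jmatrix_transpose_apply (X : Matrix (Fin (e + d)) (Fin (e + d)) ℂ) (i j : Fin (e + d)) :
    (X * (Jmatrix e d)ᵀ) i j = mulJt e d (natEntries X) i j := by
  rw [mulJt, ← Fin.sum_univ_eq_sum_range (fun k => natEntries X i k * Jfun e d j k)]
  simp [Jmatrix, mul_apply]

theorem eq_zero_of_commutator_mem_upperRightBlock (he : 0 < e) (hd : 0 < d) (hcop : e.Coprime d)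
    {P : Matrix (Fin (e + d)) (Fin (e + d)) ℂ} (hP : P ∈ blockUpper e) (htr : P.trace = 0)
    (hc : (Jmatrix e d)ᵀ * P - P * (Jmatrix e d)ᵀ ∈ upperRightBlock e) : P = 0 := by
  obtain ⟨c, hPc⟩ := IsStabilizer.exists_isScalarOn he hd hcop (P := natEntries P)
    ⟨fun i j hi hj hei hje => by simpa [natEntries, hi, hj] using hP ⟨i, hi⟩ ⟨j, hj⟩ hei hje,
     fun i j hi hj hij => by
      simpa [sub_eq_zero, Jmatrix_transpose_mul_apply, mul_Jmatrix_transpose_apply]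
        using hc ⟨i, hi⟩ ⟨j, hj⟩ hij⟩
  have hP_eq : P = c • 1 := by
    ext i j
    rw [← natEntries_val P, hPc i j i.2 j.2]
    simp [one_apply, Fin.val_inj]
  have hc0 : c = 0 := by
    have : (e : ℂ) + d ≠ 0 := by exact_mod_cast (by omega : e + d ≠ 0)
    simpa [hP_eq, this] using htr
  rw [hP_eq, hc0, zero_smul]

theorem eq_zero_of_commutator_add_eq_zero (he : 0 < e) (hd : 0 < d) (hcop : e.Coprime d)
    {P N : Matrix (Fin (e + d)) (Fin (e + d)) ℂ} (hP : P ∈ blockUpper e) (htr : P.trace = 0)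
    (hN : N ∈ upperRightBlock e) (h : (Jmatrix e d)ᵀ * P - P * (Jmatrix e d)ᵀ + N = 0) :
    P = 0 ∧ N = 0 := by
  obtain rfl := eq_zero_of_commutator_mem_upperRightBlock he hd hcop hP htr
    (eq_neg_of_add_eq_zero_left h ▸ neg_mem hN)
  simpa using h

noncomputable def frobeniusMap (e : ℕ) (K : Matrix (Fin n) (Fin n) ℂ) :
    Matrix (Fin n) (Fin n) ℂ →ₗ[ℂ] Matrix (Fin n) (Fin n) ℂ :=
  (LinearMap.mulLeft ℂ K - LinearMap.mulRight ℂ K) ∘ₗ blockUpperPart e + lowerLeftTranspose e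
    + (traceLinearMap (Fin n) ℂ ℂ).smulRight 1

lemma frobeniusMap_apply (K X : Matrix (Fin n) (Fin n) ℂ) :
    frobeniusMap e K X
      = K * blockUpperPart e X - blockUpperPart e X * K + lowerLeftTranspose e X
        + X.trace • 1 :=
  rfl

lemma trace_frobeniusMap (K X : Matrix (Fin n) (Fin n) ℂ) :
    (frobeniusMap e K X).trace = n * X.trace := by
  simp [frobeniusMap_apply, trace_mul_comm K, trace_lowerLeftTranspose, mul_comm]

lemma trace_eq_zero_of_trace_frobeniusMap_eq_zero [NeZero n] {K X : Matrix (Fin n) (Fin n) ℂ}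
    (h : (frobeniusMap e K X).trace = 0) : X.trace = 0 := by
  simpa [trace_frobeniusMap, NeZero.ne n] using h

theorem frobeniusMap_injective (he : 0 < e) (hd : 0 < d) (hcop : e.Coprime d) :
    Function.Injective (frobeniusMap e (Jmatrix e d)ᵀ) := by
  rw [← LinearMap.ker_eq_bot, LinearMap.ker_eq_bot']
  intro X hX
  have : NeZero (e + d) := ⟨by omega⟩
  have htr := trace_eq_zero_of_trace_frobeniusMap_eq_zero (hX ▸ trace_zero _ _)
  rw [frobeniusMap_apply, htr, zero_smul, add_zero] at hX
  obtain ⟨hP, hN⟩ := eq_zero_of_commutator_add_eq_zero he hd hcop (blockUpperPart_mem X)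
    (by rwa [trace_blockUpperPart]) (lowerLeftTranspose_mem X) hX
  exact eq_zero_of_blockUpperPart_eq_zero hP hN

end MatrixSide

theorem stmt_12 (e d : ℕ) (he : 0 < e) (hd : 0 < d) (hcop : Nat.Coprime e d)
    (J : Matrix (Fin (e + d)) (Fin (e + d)) ℂ)
    (hJ : J = Matrix.of fun i j : Fin (e + d) => Jfun e d (i : ℕ) (j : ℕ))
    (G : Matrix (Fin (e + d)) (Fin (e + d)) ℂ) (hG : G.trace = 0) :
    ∃! PN : Matrix (Fin (e + d)) (Fin (e + d)) ℂ × Matrix (Fin (e + d)) (Fin (e + d)) ℂ,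
      (PN.1.trace = 0 ∧ ∀ i j : Fin (e + d), e ≤ (i : ℕ) → (j : ℕ) < e → PN.1 i j = 0) ∧
      (∀ i j : Fin (e + d), ¬((i : ℕ) < e ∧ e ≤ (j : ℕ)) → PN.2 i j = 0) ∧
      G = (Jᵀ * PN.1 - PN.1 * Jᵀ) + PN.2 := by
  obtain rfl : J = Jmatrix e d := hJ
  have : NeZero (e + d) := ⟨by omega⟩
  obtain ⟨X, rfl⟩ := LinearMap.injective_iff_surjective.1 (frobeniusMap_injective he hd hcop) G
  have htr := trace_eq_zero_of_trace_frobeniusMap_eq_zero hG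
  have hG_eq := frobeniusMap_apply (e := e) (Jmatrix e d)ᵀ X
  rw [htr, zero_smul, add_zero] at hG_eq
  refine ⟨(blockUpperPart e X, lowerLeftTranspose e X),
    ⟨⟨by rwa [trace_blockUpperPart], blockUpperPart_mem X⟩, lowerLeftTranspose_mem X, hG_eq⟩, ?_⟩
  rintro ⟨P, N⟩ ⟨⟨hPtr, hP⟩, hN, hG'⟩
  obtain ⟨hP0, hN0⟩ := eq_zero_of_commutator_add_eq_zero he hd hcop
    (sub_mem hP (blockUpperPart_mem X))
    (by rw [trace_sub, hPtr, trace_blockUpperPart, htr, sub_zero])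
    (sub_mem hN (lowerLeftTranspose_mem X))
    (by rw [mul_sub, sub_mul, ← sub_eq_zero.2 (hG'.symm.trans hG_eq)]; abel)
  exact Prod.ext (sub_eq_zero.1 hP0) (sub_eq_zero.1 hN0)
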